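/- arXiv:2304.12049 — 5 statements merged into one kernel-verified Lean document; each statement's English description precedes it below -/
import Mathlib

section
/- Let G be a simple graph. Then twice the fractional matching number, 2·μ_f(G), is an integer; that is, there exists a fractional matching f of G attaining μ_f(G) with 2·Σ_{e∈E(G)} f(e) ∈ ℤ and 2·μ_f(G) is an integer. -/
/-!
Let `d` be the largest deficiency `|S| - |N(S)|` of a vertex set `S`, where `N(S)` is the union
of the neighbourhoods of the vertices of `S`. Every edge meets `S` at most as often as it meets
`N(S)`, so the load of a fractional matching on `S` is at most its load on `N(S)`; summing the loads
over all vertices bounds twice its weight by `n - |S| + |N(S)|`, which is `n - d` for a maximising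
`S`. Conversely, Hall's theorem with deficiency `d` assigns distinct neighbours `φ v` to all but
`d` vertices `v`, and weight `1/2` on every edge `v (φ v)` (twice that if also `φ (φ v) = v`) is a
fractional matching of weight `(n - d) / 2`. Hence `2 μ_f(G) = n - d`.
-/

open scoped Classical
open Finset

/-- The spectral radius of a finite simple graph: the largest eigenvalue (as the
supremum of the set of real eigenvalues) of its adjacency matrix over `ℝ`. -/
noncomputable def specRad {V : Type*} [Fintype V] [DecidableEq V] (G : SimpleGraph V) : ℝ :=
  sSup {x : ℝ | Module.End.HasEigenvalue
    (Matrix.toLin' (Matrix.of fun i j => if G.Adj i j then (1 : ℝ) else 0)) x}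

/-- The graph `K_a ∨ (K_b + c·K_1)`: a clique of size `a` joined to the disjoint
union of a clique of size `b` and `c` isolated vertices. -/
def jGraph (a b c : ℕ) : SimpleGraph (Fin (a + b + c)) :=
  SimpleGraph.fromRel (fun x y => (x : ℕ) < a ∨ ((x : ℕ) < a + b ∧ (y : ℕ) < a + b))

/-- `f` is a fractional matching of `G`: `0 ≤ f e ≤ 1` on edges and the sum of `f`
over the edges incident with any vertex is at most `1`. -/
def IsFracMatching {V : Type*} [Fintype V] [DecidableEq V] (G : SimpleGraph V)
    (f : Sym2 V → ℝ) : Prop :=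
  (∀ e ∈ G.edgeFinset, 0 ≤ f e ∧ f e ≤ 1) ∧
    ∀ v : V, ∑ e ∈ G.edgeFinset, (if v ∈ e then f e else 0) ≤ 1

/-- The fractional matching number `μ_f(G)`. -/
noncomputable def fracNu {V : Type*} [Fintype V] [DecidableEq V] (G : SimpleGraph V) : ℝ :=
  sSup {x : ℝ | ∃ f : Sym2 V → ℝ, IsFracMatching G f ∧ x = ∑ e ∈ G.edgeFinset, f e}

/-- `i(G - S)`: the number of isolated vertices of the graph obtained from `G` by
deleting the vertices of `S`. -/
noncomputable def isoCount {V : Type*} [Fintype V] (G : SimpleGraph V) (S : Finset V) : ℕ :=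
  (Finset.univ.filter (fun v => v ∉ S ∧ ∀ u, G.Adj v u → u ∈ S)).card

/-- `G` has a spanning subgraph each of whose connected components is isomorphic
either to `K_2` or to a cycle `C_m` with `m ≥ 3`. -/
def HasK2CycleFactor {V : Type*} (G : SimpleGraph V) : Prop :=
  ∃ H : SimpleGraph V, H ≤ G ∧ ∀ c : H.ConnectedComponent,
    Nonempty (H.induce c.supp ≃g (⊤ : SimpleGraph (Fin 2))) ∨
      ∃ m : ℕ, 3 ≤ m ∧ Nonempty (H.induce c.supp ≃g SimpleGraph.cycleGraph m)

/-- `G` has a `{K_{1,1}, K_{1,2}, …, K_{1,k}}`-factor: a spanning subgraph each of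
whose connected components is a star with between `1` and `k` leaves. -/
def HasStarFactor {V : Type*} (k : ℕ) (G : SimpleGraph V) : Prop :=
  ∃ H : SimpleGraph V, H ≤ G ∧ ∀ c : H.ConnectedComponent,
    ∃ j : ℕ, 1 ≤ j ∧ j ≤ k ∧
      Nonempty (H.induce c.supp ≃g completeBipartiteGraph (Fin 1) (Fin j))

/-- The spectral radius of a real square matrix: the supremum of the moduli of its
complex eigenvalues. -/
noncomputable def matSpecRad {n : ℕ} (A : Matrix (Fin n) (Fin n) ℝ) : ℝ :=
  sSup {r : ℝ | ∃ μ : ℂ,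
    Module.End.HasEigenvalue (Matrix.toLin' (A.map (Complex.ofReal : ℝ → ℂ))) μ ∧
    r = ‖μ‖}

theorem Finset.exists_injective_sum_fin_of_card_le_card_biUnion_add {ι α : Type*}
    [DecidableEq α] (t : ι → Finset α) (d : ℕ)
    (h : ∀ s : Finset ι, #s ≤ #(s.biUnion t) + d) :
    ∃ f : ι → α ⊕ Fin d, Function.Injective f ∧ ∀ i a, f i = Sum.inl a → a ∈ t i := by
  set t' : ι → Finset (α ⊕ Fin d) := fun i => (t i).image .inl ∪ univ.image .inr
  have hall : ∀ s : Finset ι, #s ≤ #(s.biUnion t') := by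
    intro s
    rcases s.eq_empty_or_nonempty with rfl | ⟨i, hi⟩
    · simp
    have hconst : s.biUnion (fun _ => univ.image .inr) = univ.image (.inr : Fin d → α ⊕ Fin d) := by
      ext x
      simpa using fun _ _ => ⟨i, hi⟩
    rw [biUnion_union, hconst, ← biUnion_image, card_union_of_disjoint (disjoint_left.2 (by simp)),
      card_image_of_injective _ Sum.inl_injective, card_image_of_injective _ Sum.inr_injective,
      card_univ, Fintype.card_fin]
    exact h s
  obtain ⟨f, hf, hft⟩ := (all_card_le_biUnion_card_iff_exists_injective t').1 hall
  refine ⟨f, hf, fun i a hi => ?_⟩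
  simpa [t', hi] using hft i

theorem Function.Injective.card_le_card_filter_isLeft_add {ι α β : Type*} [Fintype ι]
    [Fintype β] {f : ι → α ⊕ β} (hf : Function.Injective f) :
    Fintype.card ι ≤ #{i | (f i).isLeft} + Fintype.card β := by
  have hright : #{i | ¬(f i).isLeft} ≤ Fintype.card β := by
    calc #{i | ¬(f i).isLeft} = #(({i | ¬(f i).isLeft} : Finset ι).image f) :=
          (card_image_of_injective _ hf).symm
      _ ≤ #(univ.image (Sum.inr : β → α ⊕ β)) := card_le_card fun x hx => by
          obtain ⟨i, hi, rfl⟩ := mem_image.1 hx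
          cases h : f i <;> simp_all
      _ ≤ Fintype.card β := card_image_le
  rw [← card_univ, ← card_filter_add_card_filter_not (s := univ) (fun i => (f i).isLeft)]
  omega

namespace SimpleGraph

variable {V : Type*} [Fintype V] [DecidableEq V] (G : SimpleGraph V)

theorem sum_edgeFinset_ite_mem_eq_sum_neighborFinset (f : Sym2 V → ℝ) (v : V) :
    ∑ e ∈ G.edgeFinset, (if v ∈ e then f e else 0) = ∑ u ∈ G.neighborFinset v, f s(v, u) := by
  rw [← sum_filter, ← incidenceFinset_eq_filter]
  symm
  refine sum_nbij (s(v, ·)) (fun u hu => ?_) (fun u _ w _ h => Sym2.congr_right.1 h)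
    (fun e he => ?_) fun _ _ => rfl
  · simpa [mk'_mem_incidenceSet_left_iff] using hu
  · obtain ⟨he, hv⟩ := (G.mem_incidenceFinset v e).1 he
    obtain ⟨u, rfl⟩ := Sym2.mem_iff_exists.1 hv
    exact ⟨u, by simpa using he, rfl⟩

theorem sum_sum_edgeFinset_ite_mem (f : Sym2 V → ℝ) :
    ∑ v, ∑ e ∈ G.edgeFinset, (if v ∈ e then f e else 0) = 2 * ∑ e ∈ G.edgeFinset, f e := by
  rw [sum_comm, mul_sum]
  refine sum_congr rfl fun e he => ?_
  have hcard : #{v | v ∈ e} = 2 := by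
    rw [← Sym2.card_toFinset_of_not_isDiag _ (G.not_isDiag_of_mem_edgeSet (G.mem_edgeFinset.1 he))]
    congr 1
    ext
    simp
  rw [← sum_filter, sum_const, hcard, two_smul, two_mul]

omit [DecidableEq V] in
theorem sum_sum_neighborFinset_comm (g : V → V → ℝ) :
    ∑ v, ∑ u ∈ G.neighborFinset v, g v u = ∑ v, ∑ u ∈ G.neighborFinset v, g u v := by
  simp_rw [neighborFinset_eq_filter, sum_filter]
  rw [sum_comm]
  simp_rw [G.adj_comm]

theorem card_filter_mem_le_card_filter_mem_biUnion (S : Finset V) {e : Sym2 V}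
    (he : e ∈ G.edgeFinset) :
    #{v ∈ S | v ∈ e} ≤ #{v ∈ S.biUnion (G.neighborFinset ·) | v ∈ e} := by
  induction e with
  | _ a b =>
    have hab : G.Adj a b := G.mem_edgeFinset.1 he
    refine card_le_card_of_injOn (fun v => if v = a then b else a) (fun v hv => ?_)
      fun v hv w hw h => ?_
    · simp only [coe_filter, Set.mem_ofPred_eq, Sym2.mem_iff] at hv
      rcases hv with ⟨hvS, rfl | rfl⟩
      · simpa using ⟨v, hvS, hab⟩
      · simpa [hab.ne.symm] using ⟨v, hvS, hab.symm⟩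
    · simp only [coe_filter, Set.mem_ofPred_eq, Sym2.mem_iff] at hv hw
      rcases hv.2 with rfl | rfl <;> rcases hw.2 with rfl | rfl <;> simp_all [hab.ne, hab.ne.symm]

theorem two_mul_sum_le_of_isFracMatching {f : Sym2 V → ℝ} (hf : IsFracMatching G f)
    (S : Finset V) :
    2 * ∑ e ∈ G.edgeFinset, f e ≤ Fintype.card V - #S + #(S.biUnion (G.neighborFinset ·)) := by
  set N := S.biUnion (G.neighborFinset ·)
  set load : V → ℝ := fun v => ∑ e ∈ G.edgeFinset, if v ∈ e then f e else 0
  have hload_le (T : Finset V) : ∑ v ∈ T, load v ≤ #T := by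
    simpa using sum_le_sum fun v _ => hf.2 v
  have hS : ∑ v ∈ S, load v ≤ ∑ v ∈ N, load v := by
    simp only [load]
    rw [sum_comm, sum_comm (s := N)]
    refine sum_le_sum fun e he => ?_
    simp only [← sum_filter, sum_const, nsmul_eq_mul]
    exact mul_le_mul_of_nonneg_right
      (by exact_mod_cast G.card_filter_mem_le_card_filter_mem_biUnion S he) (hf.1 e he).1
  calc 2 * ∑ e ∈ G.edgeFinset, f e = ∑ v ∈ Sᶜ, load v + ∑ v ∈ S, load v := by
        rw [← sum_sum_edgeFinset_ite_mem, sum_compl_add_sum]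
    _ ≤ #Sᶜ + #N := add_le_add (hload_le _) (hS.trans (hload_le _))
    _ = _ := by rw [card_compl, Nat.cast_sub (card_le_univ S)]

noncomputable def halfMatchingOf {β : Type*} (φ : V → V ⊕ β) : Sym2 V → ℝ :=
  Sym2.lift ⟨fun a b => ((if φ a = .inl b then 1 else 0) + (if φ b = .inl a then 1 else 0)) / 2,
    fun _ _ => by beta_reduce; rw [add_comm]⟩

variable {G} {β : Type*} {φ : V → V ⊕ β}

omit [Fintype V] in
theorem halfMatchingOf_mk (a b : V) : halfMatchingOf φ s(a, b) =
    ((if φ a = .inl b then 1 else 0) + (if φ b = .inl a then 1 else 0)) / 2 :=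
  rfl

theorem sum_neighborFinset_halfMatchingOf (v : V) :
    ∑ u ∈ G.neighborFinset v, halfMatchingOf φ s(v, u) =
      (#{u ∈ G.neighborFinset v | φ v = .inl u} +
        #{u ∈ G.neighborFinset v | φ u = .inl v}) / 2 := by
  simp only [halfMatchingOf_mk, ← sum_div, sum_add_distrib, sum_boole]

theorem isFracMatching_halfMatchingOf (hφ : Function.Injective φ) :
    IsFracMatching G (halfMatchingOf φ) := by
  refine ⟨fun e _ => ?_, fun v => ?_⟩
  · induction e with
    | _ a b => rw [halfMatchingOf_mk]; constructor <;> split_ifs <;> norm_num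
  · rw [sum_edgeFinset_ite_mem_eq_sum_neighborFinset, sum_neighborFinset_halfMatchingOf]
    have hout : #{u ∈ G.neighborFinset v | φ v = .inl u} ≤ 1 :=
      card_le_one.2 fun u hu w hw =>
        Sum.inl_injective ((mem_filter.1 hu).2.symm.trans (mem_filter.1 hw).2)
    have hin : #{u ∈ G.neighborFinset v | φ u = .inl v} ≤ 1 :=
      card_le_one.2 fun u hu w hw => hφ ((mem_filter.1 hu).2.trans (mem_filter.1 hw).2.symm)
    rw [div_le_one two_pos]
    exact_mod_cast Nat.add_le_add hout hin

theorem two_mul_sum_halfMatchingOf (hadj : ∀ v u, φ v = .inl u → G.Adj v u) :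
    2 * ∑ e ∈ G.edgeFinset, halfMatchingOf φ e = #{v | (φ v).isLeft} := by
  have hout (v : V) :
      #{u ∈ G.neighborFinset v | φ v = .inl u} = if (φ v).isLeft then 1 else 0 := by
    cases h : φ v with
    | inl w => simp [filter_eq, hadj v w h]
    | inr _ => simp
  have hswap : ∑ v, (#{u ∈ G.neighborFinset v | φ u = .inl v} : ℝ) =
      ∑ v, (#{u ∈ G.neighborFinset v | φ v = .inl u} : ℝ) := by
    simpa only [sum_boole] using
      (G.sum_sum_neighborFinset_comm fun v u => if φ v = .inl u then (1 : ℝ) else 0).symm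
  rw [← sum_sum_edgeFinset_ite_mem]
  simp only [sum_edgeFinset_ite_mem_eq_sum_neighborFinset, sum_neighborFinset_halfMatchingOf]
  rw [← sum_div, sum_add_distrib, hswap, add_self_div_two]
  simp [hout]

variable (G)

theorem exists_isFracMatching_forall_le_two_mul_sum_eq_intCast :
    ∃ f : Sym2 V → ℝ, IsFracMatching G f ∧
      (∀ g, IsFracMatching G g → ∑ e ∈ G.edgeFinset, g e ≤ ∑ e ∈ G.edgeFinset, f e) ∧
      ∃ m : ℤ, 2 * ∑ e ∈ G.edgeFinset, f e = m := by
  obtain ⟨S₀, -, hS₀⟩ := exists_max_image univ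
    (fun S : Finset V => (#S : ℤ) - #(S.biUnion (G.neighborFinset ·))) univ_nonempty
  have hN : #(S₀.biUnion (G.neighborFinset ·)) ≤ #S₀ := by
    have := hS₀ ∅ (mem_univ _)
    simp only [card_empty, biUnion_empty] at this
    omega
  set d := #S₀ - #(S₀.biUnion (G.neighborFinset ·))
  obtain ⟨φ, hφ, hφN⟩ := exists_injective_sum_fin_of_card_le_card_biUnion_add
    (G.neighborFinset ·) d fun S => by have := hS₀ S (mem_univ _); omega
  have hadj (v u : V) (h : φ v = .inl u) : G.Adj v u := (G.mem_neighborFinset v u).1 (hφN v u h)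
  refine ⟨halfMatchingOf φ, isFracMatching_halfMatchingOf hφ, fun g hg => ?_,
    #{v | (φ v).isLeft}, by rw [two_mul_sum_halfMatchingOf hadj, Int.cast_natCast]⟩
  have hcard : (Fintype.card V : ℝ) ≤ #{v | (φ v).isLeft} + d := by
    exact_mod_cast Fintype.card_fin d ▸ hφ.card_le_card_filter_isLeft_add
  have hd : (d : ℝ) = #S₀ - #(S₀.biUnion (G.neighborFinset ·)) := Nat.cast_sub hN
  linarith [G.two_mul_sum_le_of_isFracMatching hg S₀, two_mul_sum_halfMatchingOf hadj]

theorem fracNu_eq_sum_of_forall_le {f : Sym2 V → ℝ} (hf : IsFracMatching G f)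
    (hmax : ∀ g, IsFracMatching G g → ∑ e ∈ G.edgeFinset, g e ≤ ∑ e ∈ G.edgeFinset, f e) :
    fracNu G = ∑ e ∈ G.edgeFinset, f e :=
  IsGreatest.csSup_eq ⟨⟨f, hf, rfl⟩, by rintro _ ⟨g, hg, rfl⟩; exact hmax g hg⟩

end SimpleGraph

/-- Twice the fractional matching number is an integer; moreover it is attained by a
fractional matching whose doubled total weight is an integer. -/
theorem stmt1 {V : Type*} [Fintype V] [DecidableEq V] (G : SimpleGraph V) :
    (∃ f : Sym2 V → ℝ, IsFracMatching G f ∧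
      (∑ e ∈ G.edgeFinset, f e) = fracNu G ∧
      ∃ m : ℤ, 2 * ∑ e ∈ G.edgeFinset, f e = (m : ℝ)) ∧
    ∃ m : ℤ, 2 * fracNu G = (m : ℝ) := by
  obtain ⟨f, hf, hmax, m, hm⟩ := G.exists_isFracMatching_forall_le_two_mul_sum_eq_intCast
  have hnu := G.fracNu_eq_sum_of_forall_le hf hmax
  exact ⟨⟨f, hf, hnu.symm, m, hm⟩, m, hnu ▸ hm⟩
end

section
/- (Tutte) A simple graph G has a spanning subgraph each of whose connected components is isomorphic either to K_2 or to a cycle (of some length at least 3) if and only if i(G−S) ≤ |S| for every vertex subset S ⊆ V(G). -/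
/-! A `{K₂, cycles}`-factor of `G` amounts to a permutation `σ` of `V` with `v ~ σ v` for all
`v`: the components of the graph of `σ` are its orbits, which are cycles of length at least two
(length two giving `K₂`), and conversely rotating every component of a factor gives such a `σ`.
Such a `σ` is a system of distinct representatives for the neighbourhoods, so by Hall's theorem
it exists iff `|T| ≤ |N(T)|` for all `T`. That follows from `i(G - S) ≤ |S|` for
`S = N(T) \ T`: every vertex of `T` without a neighbour in `T` is isolated in `G - S`, and every
other vertex of `T` lies in `N(T) ∩ T`. -/

open scoped Classical
open Finset

namespace Equiv.Perm

variable {V : Type*} {σ : Equiv.Perm V}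

theorem minimalPeriod_pos [Finite V] (σ : Equiv.Perm V) (v : V) : 0 < Function.minimalPeriod σ v :=
  Function.minimalPeriod_pos_of_mem_periodicPts (σ.injective.mem_periodicPts v)

theorem exists_equiv_fin_sameCycle [Finite V] {v : V} {n : ℕ}
    (hn : Function.minimalPeriod σ v = n + 1) :
    ∃ e : Fin (n + 1) ≃ {w // σ.SameCycle v w}, ∀ k, σ (e k) = e (k + 1) := by
  have iterate_mod (i : ℕ) : σ^[i % (n + 1)] v = σ^[i] v :=
    hn ▸ Function.iterate_mod_minimalPeriod_eq
  let f (k : Fin (n + 1)) : {w // σ.SameCycle v w} :=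
    ⟨σ^[k] v, by rw [iterate_eq_pow]; exact sameCycle_pow_right.mpr (SameCycle.refl σ v)⟩
  have hf : Function.Bijective f := by
    refine ⟨fun a b hab => Fin.ext ?_, fun ⟨w, hw⟩ => ?_⟩
    · exact (Function.iterate_eq_iterate_iff_of_lt_minimalPeriod (hn.symm ▸ a.isLt)
        (hn.symm ▸ b.isLt)).mp (congrArg Subtype.val hab)
    · obtain ⟨i, rfl⟩ := hw.exists_nat_pow_eq
      exact ⟨⟨i % (n + 1), Nat.mod_lt _ n.succ_pos⟩, Subtype.ext <| by
        simp only [f, iterate_mod, iterate_eq_pow]⟩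
  refine ⟨Equiv.ofBijective f hf, fun k => ?_⟩
  simp only [Equiv.ofBijective_apply, f, Fin.val_add, Fin.val_one', Nat.add_mod_mod, iterate_mod]
  exact (Function.iterate_succ_apply' σ k v).symm

end Equiv.Perm

namespace SimpleGraph

variable {V : Type*}

def permGraph (σ : Equiv.Perm V) : SimpleGraph V :=
  fromRel fun u v => σ u = v

variable {σ : Equiv.Perm V}

theorem permGraph_adj {u v : V} : (permGraph σ).Adj u v ↔ u ≠ v ∧ (σ u = v ∨ σ v = u) :=
  fromRel_adj _ u v

theorem permGraph_le {G : SimpleGraph V} (hσ : ∀ v, G.Adj v (σ v)) : permGraph σ ≤ G := by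
  rintro u v ⟨-, rfl | rfl⟩
  exacts [hσ u, (hσ v).symm]

theorem permGraph_reachable_apply (v : V) : (permGraph σ).Reachable v (σ v) := by
  by_cases h : v = σ v
  · exact h ▸ Reachable.refl v
  · exact (permGraph_adj.mpr ⟨h, Or.inl rfl⟩).reachable

theorem permGraph_reachable_iff [Finite V] {u v : V} :
    (permGraph σ).Reachable u v ↔ σ.SameCycle u v := by
  constructor
  · rintro ⟨p⟩
    induction p with
    | nil => exact Equiv.Perm.SameCycle.refl σ _
    | cons h _ ih =>
      obtain ⟨-, h | h⟩ := permGraph_adj.mp h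
      · exact Equiv.Perm.sameCycle_apply_left.mp (h ▸ ih)
      · exact h ▸ Equiv.Perm.sameCycle_apply_left.mpr ih
  · intro h
    obtain ⟨i, rfl⟩ := h.exists_nat_pow_eq
    clear h
    induction i with
    | zero => exact Reachable.refl u
    | succ i ih =>
      exact ih.trans (by simpa [pow_succ'] using permGraph_reachable_apply ((σ ^ i) u))

theorem cycleGraph_succ_adj {n : ℕ} {a b : Fin (n + 1)} :
    (cycleGraph (n + 1)).Adj a b ↔ a ≠ b ∧ (a + 1 = b ∨ b + 1 = a) := by
  rw [cycleGraph_eq_circulantGraph, circulantGraph_adj, Set.mem_singleton_iff,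
    Set.mem_singleton_iff, sub_eq_iff_eq_add, sub_eq_iff_eq_add, add_comm b, add_comm a]
  tauto

theorem mem_supp_permGraph_iff [Finite V] {v w : V} :
    w ∈ ((permGraph σ).connectedComponentMk v).supp ↔ σ.SameCycle v w := by
  rw [ConnectedComponent.mem_supp_iff, ConnectedComponent.eq, permGraph_reachable_iff,
    Equiv.Perm.sameCycle_comm]

theorem nonempty_induce_supp_permGraph_iso [Finite V] (v : V) :
    Nonempty ((permGraph σ).induce ((permGraph σ).connectedComponentMk v).supp ≃g
      cycleGraph (Function.minimalPeriod σ v)) := by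
  obtain ⟨n, hn⟩ := Nat.exists_eq_add_one.mpr (σ.minimalPeriod_pos v)
  obtain ⟨e, he⟩ := Equiv.Perm.exists_equiv_fin_sameCycle hn
  have he_inj (a b : Fin (n + 1)) : (e a : V) = e b ↔ a = b :=
    (Subtype.val_injective.comp e.injective).eq_iff
  rw [hn]
  refine ⟨(RelIso.mk (e.trans (Equiv.subtypeEquivRight fun _ => mem_supp_permGraph_iff.symm))
    fun {a b} => ?_).symm⟩
  simp only [comap_adj, Function.Embedding.subtype_apply, Equiv.trans_apply,
    Equiv.subtypeEquivRight_apply_coe, permGraph_adj, he, he_inj, ne_eq, cycleGraph_succ_adj]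

section Factor

variable {W : Type*} {G : SimpleGraph V}

theorem hasK2CycleFactor_of_perm [Finite V] (hσ : ∀ v, G.Adj v (σ v)) :
    HasK2CycleFactor G := by
  refine ⟨permGraph σ, permGraph_le hσ, ConnectedComponent.ind fun v => ?_⟩
  obtain ⟨e⟩ := nonempty_induce_supp_permGraph_iso (σ := σ) v
  have hpos := σ.minimalPeriod_pos v
  have hne_one : Function.minimalPeriod σ v ≠ 1 :=
    Function.minimalPeriod_eq_one_iff_isFixedPt.not.mpr (hσ v).ne'
  rcases (show 2 ≤ Function.minimalPeriod σ v by omega).eq_or_lt with h | h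
  · rw [← h, cycleGraph_two_eq_top] at e
    exact Or.inl ⟨e⟩
  · exact Or.inr ⟨_, h, ⟨e⟩⟩

theorem Iso.exists_perm_adj {G' : SimpleGraph W} (e : G ≃g G')
    (h : ∃ τ : Equiv.Perm W, ∀ w, G'.Adj w (τ w)) : ∃ σ : Equiv.Perm V, ∀ v, G.Adj v (σ v) := by
  obtain ⟨τ, hτ⟩ := h
  refine ⟨(e.toEquiv.trans τ).trans e.toEquiv.symm, fun v => ?_⟩
  have := e.symm.map_adj_iff.mpr (hτ (e v))
  rwa [RelIso.symm_apply_apply] at this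

theorem cycleGraph_exists_perm_adj (n : ℕ) :
    ∃ σ : Equiv.Perm (Fin (n + 2)), ∀ a, (cycleGraph (n + 2)).Adj a (σ a) :=
  ⟨Equiv.addRight 1, fun a => cycleGraph_adj.mpr (Or.inr (add_sub_cancel_left a 1))⟩

theorem exists_perm_adj_of_forall_connectedComponent (h : ∀ c : G.ConnectedComponent,
    ∃ σ : Equiv.Perm c.supp, ∀ x, (G.induce c.supp).Adj x (σ x)) :
    ∃ σ : Equiv.Perm V, ∀ v, G.Adj v (σ v) := by
  choose τ hτ using h
  let e := Equiv.sigmaFiberEquiv G.connectedComponentMk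
  exact ⟨(e.symm.trans (Equiv.sigmaCongrRight τ)).trans e, fun v => hτ _ ⟨v, rfl⟩⟩

theorem exists_perm_adj_of_hasK2CycleFactor (h : HasK2CycleFactor G) :
    ∃ σ : Equiv.Perm V, ∀ v, G.Adj v (σ v) := by
  obtain ⟨H, hHG, hH⟩ := h
  obtain ⟨σ, hσ⟩ := exists_perm_adj_of_forall_connectedComponent fun c => by
    obtain ⟨⟨e⟩⟩ | ⟨m, hm, ⟨e⟩⟩ := hH c
    · exact e.exists_perm_adj (cycleGraph_two_eq_top ▸ cycleGraph_exists_perm_adj 0)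
    · obtain ⟨n, rfl⟩ := Nat.exists_eq_add_of_le' hm
      exact e.exists_perm_adj (cycleGraph_exists_perm_adj (n + 1))
  exact ⟨σ, fun v => hHG (hσ v)⟩

theorem hasK2CycleFactor_iff_exists_perm_adj [Finite V] :
    HasK2CycleFactor G ↔ ∃ σ : Equiv.Perm V, ∀ v, G.Adj v (σ v) :=
  ⟨exists_perm_adj_of_hasK2CycleFactor, fun ⟨_, hσ⟩ => hasK2CycleFactor_of_perm hσ⟩

end Factor

section Hall

variable [Fintype V] {G : SimpleGraph V}

theorem isoCount_le_card_of_perm {σ : Equiv.Perm V} (hσ : ∀ v, G.Adj v (σ v)) (S : Finset V) :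
    isoCount G S ≤ S.card :=
  card_le_card_of_injOn σ (fun v hv => (mem_filter.mp hv).2.2 _ (hσ v)) σ.injective.injOn

theorem card_le_card_biUnion_neighborFinset (h : ∀ S : Finset V, isoCount G S ≤ S.card)
    (T : Finset V) : T.card ≤ (T.biUnion fun v => G.neighborFinset v).card := by
  set N := T.biUnion fun v => G.neighborFinset v
  set I := T.filter fun v => ∀ u ∈ T, ¬G.Adj v u
  have hI : I.card ≤ (N \ T).card := by
    refine (card_le_card fun v hv => ?_).trans (h (N \ T))
    obtain ⟨hvT, hv⟩ := mem_filter.mp hv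
    refine mem_filter.mpr ⟨mem_univ v, fun hv' => (mem_sdiff.mp hv').2 hvT, fun u hu => ?_⟩
    exact mem_sdiff.mpr ⟨mem_biUnion.mpr ⟨v, hvT, (mem_neighborFinset _ _ _).mpr hu⟩,
      fun huT => hv u huT hu⟩
  have hT : T ⊆ N ∩ T ∪ I := by
    intro v hvT
    by_cases hv : ∃ u ∈ T, G.Adj v u
    · obtain ⟨u, huT, hvu⟩ := hv
      exact mem_union_left _ (mem_inter.mpr
        ⟨mem_biUnion.mpr ⟨u, huT, (mem_neighborFinset _ _ _).mpr hvu.symm⟩, hvT⟩)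
    · push Not at hv
      exact mem_union_right _ (mem_filter.mpr ⟨hvT, hv⟩)
  calc T.card ≤ (N ∩ T).card + I.card := (card_le_card hT).trans (card_union_le _ _)
    _ ≤ (N ∩ T).card + (N \ T).card := Nat.add_le_add_left hI _
    _ = N.card := card_inter_add_card_sdiff N T

theorem exists_perm_adj_of_isoCount_le (h : ∀ S : Finset V, isoCount G S ≤ S.card) :
    ∃ σ : Equiv.Perm V, ∀ v, G.Adj v (σ v) := by
  obtain ⟨f, hf_inj, hf⟩ :=
    (all_card_le_biUnion_card_iff_exists_injective fun v => G.neighborFinset v).mp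
      (card_le_card_biUnion_neighborFinset h)
  exact ⟨Equiv.ofBijective f (Finite.injective_iff_bijective.mp hf_inj),
    fun v => (mem_neighborFinset _ _ _).mp (hf v)⟩

theorem exists_perm_adj_iff_isoCount_le :
    (∃ σ : Equiv.Perm V, ∀ v, G.Adj v (σ v)) ↔ ∀ S : Finset V, isoCount G S ≤ S.card :=
  ⟨fun ⟨_, hσ⟩ => isoCount_le_card_of_perm hσ, exists_perm_adj_of_isoCount_le⟩

end Hall

end SimpleGraph

/-- Tutte's theorem: `G` has a `{K_2, cycles}`-factor if and only if
`i(G−S) ≤ |S|` for every vertex subset `S`. -/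
theorem stmt5 {V : Type*} [Fintype V] (G : SimpleGraph V) :
    HasK2CycleFactor G ↔ ∀ S : Finset V, isoCount G S ≤ S.card :=
  G.hasK2CycleFactor_iff_exists_perm_adj.trans G.exists_perm_adj_iff_isoCount_le
end

section
/- Let δ ≥ 0 be an integer and let n ≥ 5δ+6. Then for every integer s with δ+1 ≤ s ≤ (n−1)/2, ρ(K_s ∨ (K_{n−2s−1} + (s+1)K_1)) < ρ(K_δ ∨ (K_{n−2δ−1} + (δ+1)K_1)). -/
open scoped Classical
open Finset

/-! The graphs `G_s = K_s ∨ (K_{n-2s-1} + (s+1)K_1)` have the equitable partition into the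
clique, the `K_{n-2s-1}` and the isolated vertices; let `φ_s` be the characteristic polynomial
of its quotient matrix `Q_s`. Lifting `adj (x I - Q_s) 𝟙` to a block vector `X` gives
`A X = x X - φ_s(x) 𝟙`, with `X > 0` once `x > n - 2s - 2`.

Take a root `r ≥ n - δ - 2` of `φ_δ`: then `X` is an eigenvector of `G_δ` for `r`, so
`r ≤ ρ(G_δ)`. Moreover `φ_s(r) = φ_s(r) - φ_δ(r) = (s - δ) h(r)` for a quadratic `h` that is
positive in the whole range of `s` as soon as `n ≥ 5δ + 6`, so on `G_s` the positive vector `X`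
satisfies `A X < r X`, and the Collatz–Wielandt bound gives `ρ(G_s) < r`. -/

open Matrix Module.End

def blockVec (a b c : ℕ) (x y z : ℝ) (v : Fin (a + b + c)) : ℝ :=
  if (v : ℕ) < a then x else if (v : ℕ) < a + b then y else z

theorem sum_blockVec (a b c : ℕ) (x y z : ℝ) :
    ∑ v, blockVec a b c x y z v = a * x + b * y + c * z := by
  simp [Fin.sum_univ_add, blockVec, add_assoc]

theorem jGraph_adj_iff {a b c : ℕ} {v u : Fin (a + b + c)} :
    (jGraph a b c).Adj v u ↔
      v ≠ u ∧ ((v : ℕ) < a ∨ (u : ℕ) < a ∨ ((v : ℕ) < a + b ∧ (u : ℕ) < a + b)) := by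
  simp only [jGraph, SimpleGraph.fromRel_adj]
  tauto

theorem jGraph_adjMatrix_mulVec_blockVec (a b c : ℕ) (x y z : ℝ) :
    (jGraph a b c).adjMatrix ℝ *ᵥ blockVec a b c x y z =
      blockVec a b c ((a - 1) * x + b * y + c * z) (a * x + (b - 1) * y) (a * x) := by
  ext v
  -- row `v` of the adjacency matrix selects the blocks joined to the block of `v`, minus `v`
  have hrow : ∀ u, (jGraph a b c).adjMatrix ℝ v u * blockVec a b c x y z u =
      blockVec a b c x (if (v : ℕ) < a + b then y else 0) (if (v : ℕ) < a then z else 0) u -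
        if u = v then (if (v : ℕ) < a + b then blockVec a b c x y z v else 0) else 0 := by
    intro u
    simp only [SimpleGraph.adjMatrix_apply, jGraph_adj_iff, blockVec]
    by_cases huv : u = v
    · subst huv; split_ifs <;> first | omega | simp_all
    · split_ifs <;> first | omega | simp_all
  simp only [mulVec, dotProduct, hrow, Finset.sum_sub_distrib, sum_blockVec,
    Finset.sum_ite_eq', Finset.mem_univ, if_true]
  simp only [blockVec]
  split_ifs <;> first | omega | ring

theorem Module.End.HasEigenvalue.lt_of_mulVec_lt {ι : Type*} [Fintype ι] [DecidableEq ι]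
    {A : Matrix ι ι ℝ} {μ : ℝ}
    (hμ : HasEigenvalue (toLin' A) μ) (hA : ∀ i j, 0 ≤ A i j) {x : ι → ℝ} (hx : ∀ i, 0 < x i)
    {c : ℝ} (hc : ∀ i, (A *ᵥ x) i < c * x i) : μ < c := by
  obtain ⟨f, hf, hf0⟩ := hμ.exists_hasEigenvector
  have hAf : A *ᵥ f = μ • f := mem_eigenspace_iff.mp hf
  obtain ⟨w, hw⟩ := Function.ne_iff.mp hf0
  have : Nonempty ι := ⟨w⟩
  obtain ⟨i, hi⟩ := Finite.exists_max fun j => |f j| / x j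
  set q := |f i| / x i
  have hfq : ∀ j, |f j| ≤ q * x j := fun j => (div_le_iff₀ (hx j)).mp (hi j)
  have hq : 0 < q := (div_pos (abs_pos.mpr hw) (hx w)).trans_le (hi w)
  have hfi : q * x i = |f i| := div_mul_cancel₀ _ (hx i).ne'
  have key : |μ| * |f i| < c * |f i| := calc
    |μ| * |f i| = |∑ j, A i j * f j| := by
      rw [← abs_mul, ← smul_eq_mul, ← Pi.smul_apply, ← hAf]; rfl
    _ ≤ ∑ j, A i j * |f j| := by
      refine (Finset.abs_sum_le_sum_abs _ _).trans_eq (Finset.sum_congr rfl fun j _ => ?_)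
      rw [abs_mul, abs_of_nonneg (hA i j)]
    _ ≤ ∑ j, A i j * (q * x j) := by gcongr with j; exacts [hA i j, hfq j]
    _ = q * (A *ᵥ x) i := by
      simp only [mulVec, dotProduct, Finset.mul_sum]
      exact Finset.sum_congr rfl fun j _ => by ring
    _ < q * (c * x i) := by gcongr; exact hc i
    _ = c * |f i| := by rw [← hfi]; ring
  exact (le_abs_self μ).trans_lt (lt_of_mul_lt_mul_right key (abs_nonneg _))

section SpecRad

variable {V : Type*} [Fintype V] [DecidableEq V] (G : SimpleGraph V)

theorem specRad_lt_of_mulVec_lt {x : V → ℝ} (hx : ∀ v, 0 < x v) {t : ℝ} (ht : 0 < t)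
    (hxt : ∀ v, (G.adjMatrix ℝ *ᵥ x) v < t * x v) : specRad G < t := by
  show sSup {μ | HasEigenvalue (toLin' (G.adjMatrix ℝ)) μ} < t
  rcases Set.eq_empty_or_nonempty {μ | HasEigenvalue (toLin' (G.adjMatrix ℝ)) μ} with h | h
  · rwa [h, Real.sSup_empty]
  · refine ((finite_hasEigenvalue _).csSup_lt_iff h).mpr fun μ hμ => ?_
    exact hμ.lt_of_mulVec_lt (fun i j => by by_cases G.Adj i j <;> simp [*]) hx hxt

theorem le_specRad_of_mulVec_eq {x : V → ℝ} (hx : x ≠ 0) {t : ℝ}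
    (hxt : G.adjMatrix ℝ *ᵥ x = t • x) : t ≤ specRad G :=
  le_csSup (finite_hasEigenvalue _).bddAbove
    (hasEigenvalue_of_hasEigenvector ⟨mem_eigenspace_iff.mpr hxt, hx⟩)

end SpecRad

/-- `det (x I - Q)` for the quotient matrix `Q = !![a-1, b, c; a, b-1, 0; a, 0, 0]` of the
partition of `jGraph a b c` into its three blocks. -/
def jCharPoly (a b c x : ℝ) : ℝ :=
  x * (x - a + 1) * (x - b + 1) - a * b * x - a * c * (x - b + 1)

/-- The block vector with block values `adj (x I - Q) 𝟙`, so that `(x I - Q)` maps them to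
`jCharPoly a b c x` in every block. -/
def jTestVec (a b c : ℕ) (x : ℝ) : Fin (a + b + c) → ℝ :=
  blockVec a b c ((x + c) * (x - b + 1) + b * x) (x * (x + 1)) ((x + 1) * (x - b + 1))

theorem jGraph_adjMatrix_mulVec_jTestVec (a b c : ℕ) (x : ℝ) :
    (jGraph a b c).adjMatrix ℝ *ᵥ jTestVec a b c x =
      x • jTestVec a b c x - fun _ => jCharPoly a b c x := by
  ext v
  simp only [jTestVec, jGraph_adjMatrix_mulVec_blockVec, Pi.sub_apply, Pi.smul_apply,
    smul_eq_mul, blockVec, jCharPoly]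
  split_ifs <;> ring

theorem specRad_jGraph_lt {a b c : ℕ} {x : ℝ} (hx : 0 < x) (hb : (b : ℝ) < x + 1)
    (hχ : 0 < jCharPoly a b c x) : specRad (jGraph a b c) < x := by
  have hpos : ∀ v, 0 < jTestVec a b c x v := by
    have : 0 < x - b + 1 := by linarith
    intro v
    simp only [jTestVec, blockVec]
    split_ifs <;> positivity
  refine specRad_lt_of_mulVec_lt _ hpos hx fun v => ?_
  rw [jGraph_adjMatrix_mulVec_jTestVec]
  simpa using hχ

theorem le_specRad_jGraph {a b c : ℕ} (hb : 0 < b) {x : ℝ} (hx : 0 < x)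
    (hχ : jCharPoly a b c x = 0) : x ≤ specRad (jGraph a b c) := by
  refine le_specRad_of_mulVec_eq _ (x := jTestVec a b c x)
    (Function.ne_iff.mpr ⟨⟨a, by omega⟩, ?_⟩) ?_
  · simp only [jTestVec, blockVec, lt_irrefl, if_false, Nat.lt_add_of_pos_right hb, if_true,
      Pi.zero_apply]
    positivity
  · rw [jGraph_adjMatrix_mulVec_jTestVec, hχ]
    exact sub_zero _

theorem jCharPoly_sub_jCharPoly (n s d x : ℝ) :
    jCharPoly s (n - 2 * s - 1) (s + 1) x - jCharPoly d (n - 2 * d - 1) (d + 1) x =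
      (s - d) *
        (x ^ 2 - (s + d) * x - 2 * (s ^ 2 + s * d + d ^ 2) + (n - 4) * (s + d) + n - 2) := by
  unfold jCharPoly; ring

theorem exists_jCharPoly_eq_zero {n d : ℝ} (hd : 0 ≤ d) (hn : 2 * d + 2 ≤ n) :
    ∃ r, n - d - 2 ≤ r ∧ jCharPoly d (n - 2 * d - 1) (d + 1) r = 0 := by
  have hlo : jCharPoly d (n - 2 * d - 1) (d + 1) (n - d - 2) = -(d ^ 2 * (d + 1)) := by
    unfold jCharPoly; ring
  have hhi : jCharPoly d (n - 2 * d - 1) (d + 1) (n - 2) =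
      d * ((n - 2) * (n - 1) - 2 * d * (d + 1)) := by
    unfold jCharPoly; ring
  have hcont :
      ContinuousOn (jCharPoly d (n - 2 * d - 1) (d + 1)) (Set.Icc (n - d - 2) (n - 2)) := by
    unfold jCharPoly; fun_prop
  obtain ⟨r, hr, hr0⟩ := intermediate_value_Icc (by linarith) hcont
    (show (0 : ℝ) ∈ Set.Icc _ _ from
      ⟨by rw [hlo]; exact neg_nonpos.mpr (by positivity),
        by rw [hhi]; exact mul_nonneg hd (by nlinarith)⟩)
  exact ⟨r, hr.1, hr0⟩

theorem jCharPoly_pos {n d s r : ℝ} (hd : 0 ≤ d) (hn : 5 * d + 6 ≤ n) (hds : d < s)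
    (hs : 2 * s + 1 ≤ n) (hr : n - d - 2 ≤ r)
    (hroot : jCharPoly d (n - 2 * d - 1) (d + 1) r = 0) :
    0 < jCharPoly s (n - 2 * s - 1) (s + 1) r := by
  have hdiff := jCharPoly_sub_jCharPoly n s d r
  rw [hroot, sub_zero] at hdiff
  rw [hdiff]
  refine mul_pos (by linarith) ?_
  -- the quadratic factor is increasing in `r ≥ n - d - 2`, and at `r = n - d - 2` it is
  -- decreasing in `s` and still positive at `s = (n - 1) / 2`
  nlinarith

/-- For `n ≥ 5δ+6` and every integer `s` with `δ+1 ≤ s ≤ (n−1)/2`,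
`ρ(K_s ∨ (K_{n−2s−1} + (s+1)K_1)) < ρ(K_δ ∨ (K_{n−2δ−1} + (δ+1)K_1))`. -/
theorem stmt12 (δ n : ℕ) (hn : 5 * δ + 6 ≤ n)
    (s : ℕ) (hs1 : δ + 1 ≤ s) (hs2 : 2 * s + 1 ≤ n) :
    specRad (jGraph s (n - 2 * s - 1) (s + 1)) <
      specRad (jGraph δ (n - 2 * δ - 1) (δ + 1)) := by
  have hn' : (5 * δ + 6 : ℝ) ≤ n := by exact_mod_cast hn
  have hs1' : (δ : ℝ) + 1 ≤ s := by exact_mod_cast hs1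
  have hs2' : (2 * s + 1 : ℝ) ≤ n := by exact_mod_cast hs2
  have hbs : ((n - 2 * s - 1 : ℕ) : ℝ) = n - 2 * s - 1 := by
    rw [Nat.sub_sub, Nat.cast_sub hs2]; push_cast; ring
  have hbδ : ((n - 2 * δ - 1 : ℕ) : ℝ) = n - 2 * δ - 1 := by
    rw [Nat.sub_sub, Nat.cast_sub (by omega)]; push_cast; ring
  obtain ⟨r, hr, hroot⟩ := exists_jCharPoly_eq_zero (n := n) (Nat.cast_nonneg δ) (by linarith)
  calc specRad (jGraph s (n - 2 * s - 1) (s + 1)) < r := by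
        refine specRad_jGraph_lt (by linarith) (by rw [hbs]; linarith) ?_
        rw [hbs]; push_cast
        exact jCharPoly_pos (Nat.cast_nonneg δ) hn' (by linarith) hs2' hr hroot
    _ ≤ specRad (jGraph δ (n - 2 * δ - 1) (δ + 1)) := by
        refine le_specRad_jGraph (by omega) (by linarith) ?_
        rw [hbδ]; push_cast
        exact hroot
end

section
/- Let δ ≥ 0 and n ≥ 2δ+1 be integers. Then the graph K_δ ∨ (K_{n−2δ−1} + (δ+1)K_1) has no spanning subgraph each of whose connected components is isomorphic either to K_2 or to a cycle; that is, it has no {K_2, cycles}-factor. -/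
open scoped Classical
open Finset

/-! In a `{K₂, cycles}`-factor `H` every component is regular of positive degree, so the weights
`1 / deg u` sum to `1` around every vertex. Double counting them on the `H`-edges between a set
`I` and a set `S` containing all `H`-neighbours of `I` gives `#I ≤ #S`; hence `i(G - S) ≤ #S` for
every `S`. Deleting the `δ` clique vertices of `K_δ ∨ (K_b + (δ+1)K_1)` leaves `δ+1` isolated
vertices. -/

namespace SimpleGraph

variable {V : Type*} [Fintype V]

theorem ConnectedComponent.degree_induce_supp {H : SimpleGraph V} (c : H.ConnectedComponent)
    (v : c.supp) : (H.induce c.supp).degree v = H.degree v :=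
  degree_induce_of_neighborSet_subset fun _ hw => c.mem_supp_of_adj_mem_supp v.2 hw

theorem ConnectedComponent.degree_eq_of_iso {W : Type*} [Fintype W] {H : SimpleGraph V}
    {K : SimpleGraph W} (c : H.ConnectedComponent) (e : H.induce c.supp ≃g K) {v : V}
    (hv : v ∈ c.supp) : H.degree v = K.degree (e ⟨v, hv⟩) := by
  rw [e.degree_eq, c.degree_induce_supp]

theorem card_le_card_of_neighborFinset_subset {H : SimpleGraph V}
    (hpos : ∀ v, 0 < H.degree v) (hreg : ∀ v w, H.Adj v w → H.degree v = H.degree w)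
    {I S : Finset V} (hIS : ∀ v ∈ I, H.neighborFinset v ⊆ S) : #I ≤ #S := by
  let weight : V → V → ℚ := fun v u => if H.Adj v u then (H.degree u : ℚ)⁻¹ else 0
  have row : ∀ v ∈ I, ∑ u ∈ S, weight v u = 1 := by
    intro v hv
    have hfilter : S.filter (H.Adj v) = H.neighborFinset v := by
      ext u
      simpa using fun h => hIS v hv (by simpa using h)
    rw [← sum_filter, hfilter, sum_congr rfl fun u hu => by
      rw [← hreg v u ((mem_neighborFinset _ _ _).1 hu)], sum_const,
      card_neighborFinset_eq_degree, nsmul_eq_mul]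
    exact mul_inv_cancel₀ (by exact_mod_cast (hpos v).ne')
  have column : ∀ u, ∑ v ∈ I, weight v u ≤ 1 := by
    intro u
    rw [← sum_filter, sum_const, nsmul_eq_mul]
    have hcard : #(I.filter (H.Adj · u)) ≤ H.degree u := by
      rw [← card_neighborFinset_eq_degree]
      exact card_le_card fun v hv => by simpa [adj_comm] using (mem_filter.1 hv).2
    have hdeg : (0 : ℚ) < H.degree u := by exact_mod_cast hpos u
    rw [← div_eq_mul_inv, div_le_one hdeg]
    exact_mod_cast hcard
  have : (#I : ℚ) ≤ #S := calc
    (#I : ℚ) = ∑ v ∈ I, ∑ u ∈ S, weight v u := by rw [sum_congr rfl row]; simp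
    _ = ∑ u ∈ S, ∑ v ∈ I, weight v u := sum_comm
    _ ≤ ∑ _u ∈ S, (1 : ℚ) := sum_le_sum fun u _ => column u
    _ = #S := by simp
  exact_mod_cast this

end SimpleGraph

open SimpleGraph

theorem HasK2CycleFactor.exists_degree_pos_and_adj_degree_eq {V : Type*} [Fintype V]
    {G : SimpleGraph V} (h : HasK2CycleFactor G) :
    ∃ H ≤ G, (∀ v, 0 < H.degree v) ∧ ∀ v w, H.Adj v w → H.degree v = H.degree w := by
  obtain ⟨H, hle, hcomp⟩ := h
  have hcomp_deg : ∀ c : H.ConnectedComponent, ∃ d, 0 < d ∧ ∀ v ∈ c.supp, H.degree v = d := by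
    intro c
    rcases hcomp c with ⟨⟨e⟩⟩ | ⟨m, hm, ⟨e⟩⟩
    · refine ⟨1, one_pos, fun v hv => ?_⟩
      rw [c.degree_eq_of_iso e hv]
      simpa using complete_graph_degree (e ⟨v, hv⟩)
    · obtain ⟨k, rfl⟩ : ∃ k, m = k + 3 := ⟨m - 3, by omega⟩
      exact ⟨2, two_pos, fun v hv => by
        rw [c.degree_eq_of_iso e hv]
        convert cycleGraph_degree_three_le⟩
  refine ⟨H, hle, fun v => ?_, fun v w hvw => ?_⟩
  · obtain ⟨d, hd, hdeg⟩ := hcomp_deg (H.connectedComponentMk v)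
    exact hdeg v rfl ▸ hd
  · obtain ⟨d, -, hdeg⟩ := hcomp_deg (H.connectedComponentMk v)
    rw [hdeg v rfl, hdeg w (ConnectedComponent.connectedComponentMk_eq_of_adj hvw).symm]

theorem HasK2CycleFactor.isoCount_le {V : Type*} [Fintype V] {G : SimpleGraph V}
    (h : HasK2CycleFactor G) (S : Finset V) : isoCount G S ≤ #S := by
  obtain ⟨H, hle, hpos, hreg⟩ := h.exists_degree_pos_and_adj_degree_eq
  refine card_le_card_of_neighborFinset_subset hpos hreg fun v hv u hu => ?_
  exact (mem_filter.1 hv).2.2 u (hle ((mem_neighborFinset _ _ _).1 hu))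

theorem le_isoCount_jGraph (a b c : ℕ) :
    c ≤ isoCount (jGraph a b c) (univ.filter fun v => (v : ℕ) < a) := calc
  c = #(univ.filter fun v : Fin (a + b + c) => ¬ (v : ℕ) < a + b) := by
    rw [filter_not, card_sdiff_of_subset (filter_subset _ _), card_univ, Fintype.card_fin,
      Fin.card_filter_val_lt]
    omega
  _ ≤ isoCount (jGraph a b c) (univ.filter fun v => (v : ℕ) < a) := card_le_card fun v hv => by
    simp only [mem_filter, mem_univ, true_and, jGraph, fromRel_adj] at hv ⊢
    exact ⟨by omega, fun u hu => by omega⟩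

theorem stmt15_general (δ n : ℕ) :
    ¬ HasK2CycleFactor (jGraph δ (n - 2 * δ - 1) (δ + 1)) := by
  intro h
  have hiso := h.isoCount_le (univ.filter fun v => (v : ℕ) < δ)
  have hcard := le_isoCount_jGraph δ (n - 2 * δ - 1) (δ + 1)
  rw [Fin.card_filter_val_lt] at hiso
  omega

/-- For `n ≥ 2δ+1`, the graph `K_δ ∨ (K_{n−2δ−1} + (δ+1)K_1)` has no
`{K_2, cycles}`-factor. -/
theorem stmt15 (δ n : ℕ) (hn : 2 * δ + 1 ≤ n) :
    ¬ HasK2CycleFactor (jGraph δ (n - 2 * δ - 1) (δ + 1)) :=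
  stmt15_general δ n
end

section
/- Let k be a positive integer and let G be a simple graph of order n with minimum degree δ such that μ_f(G) ≤ (n−k)/2. Then there exists an integer s with δ ≤ s ≤ (n−k)/2 such that G is a spanning subgraph of K_s ∨ (K_{n−2s−k} + (s+k)K_1); consequently ρ(G) ≤ ρ(K_s ∨ (K_{n−2s−k} + (s+k)K_1)), with equality if and only if G ≅ K_s ∨ (K_{n−2s−k} + (s+k)K_1). -/
open scoped Classical
open Finset

/-!
If every vertex set `A` had `|A| ≤ |N(A)| + k - 1`, Hall's theorem with `k - 1` spare targets
would give an injective partial map `v ↦ p v ∈ N(v)` defined on all but `k - 1` vertices, and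
weight `1/2` on the edges `{v, p v}` would be a fractional matching of size `> (n - k) / 2`.
So some `A` has `|N(A)| + k ≤ |A|`; then `I = A \ N(A)` is independent, its neighbourhood `S`
is disjoint from `A`, and `|I| ≥ |S| + k`. Listing `S` first and `|S| + k` vertices of `I` last
embeds `G` into `K_s ∨ (K_{n-2s-k} + (s+k)K_1)` with `s = |S| ≥ δ`.

The spectral radius is the maximum of the Rayleigh quotient of the adjacency matrix, so moving
`|x|` along the embedding, for a top eigenvector `x` of `G`, gives `ρ(G) ≤ ρ(J)`. Under equality
the moved vector is a nonnegative top eigenvector of `J` vanishing at an end of every edge of `J`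
missing from `G`; as the edges of `J` lie in one component and `ρ(J) > 0`, that zero spreads to
every vertex, so no edge is missing.
-/

open Matrix Module.End

lemma Finset.card_le_card_biUnion_map_inl_union_map_inr {ι α : Type*} [DecidableEq α]
    {t : ι → Finset α} {d : ℕ} (h : ∀ s : Finset ι, #s ≤ #(s.biUnion t) + d)
    (s : Finset ι) :
    #s ≤ #(s.biUnion fun i => (t i).map .inl ∪ univ.map (.inr : Fin d ↪ α ⊕ Fin d)) := by
  rcases s.eq_empty_or_nonempty with rfl | ⟨i, hi⟩
  · simp
  have hsub : (s.biUnion t).map .inl ∪ univ.map .inr ⊆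
      s.biUnion fun i => (t i).map .inl ∪ univ.map (.inr : Fin d ↪ α ⊕ Fin d) := by
    intro x hx
    simp only [mem_union, mem_map, mem_biUnion] at hx ⊢
    rcases hx with ⟨a, ⟨j, hj, ha⟩, rfl⟩ | hx
    · exact ⟨j, hj, .inl ⟨a, ha, rfl⟩⟩
    · exact ⟨i, hi, .inr hx⟩
  calc #s ≤ #(s.biUnion t) + d := h s
    _ = #((s.biUnion t).map .inl ∪ univ.map .inr) := by
      rw [card_union_of_disjoint (disjoint_map_inl_map_inr _ _)]
      simp
    _ ≤ _ := card_le_card hsub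

lemma Finset.exists_injective_of_card_le_card_biUnion_add {ι α : Type*} [Fintype ι]
    [DecidableEq α] (t : ι → Finset α) (d : ℕ)
    (h : ∀ s : Finset ι, #s ≤ #(s.biUnion t) + d) :
    ∃ (M : Finset ι) (f : M → α), Function.Injective f ∧ (∀ i : M, f i ∈ t i) ∧
      Fintype.card ι ≤ #M + d := by
  set t' : ι → Finset (α ⊕ Fin d) := fun i => (t i).map .inl ∪ univ.map .inr
  obtain ⟨g, hg, hgt⟩ := (all_card_le_biUnion_card_iff_exists_injective t').mp
    (card_le_card_biUnion_map_inl_union_map_inr h)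
  set M := univ.filter fun i => (g i).isLeft
  have hleft : ∀ i : M, (g i).isLeft := fun i => (mem_filter.mp i.2).2
  refine ⟨M, fun i => (g i).getLeft (hleft i), fun i j hij => ?_, fun i => ?_, ?_⟩
  · have := congrArg (Sum.inl (β := Fin d)) hij
    simp only [Sum.inl_getLeft] at this
    exact Subtype.ext (hg this)
  · have := hgt i
    simp only [t', mem_union, mem_map, Function.Embedding.inl_apply,
      Function.Embedding.inr_apply] at this
    rcases this with ⟨a, ha, hag⟩ | ⟨_, -, hb⟩
    · dsimp only
      rwa [show (g i).getLeft (hleft i) = a from (Sum.getLeft_eq_iff _).mpr hag.symm]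
    · simpa [← hb] using hleft i
  · have hright : #(univ.filter fun i => ¬(g i).isLeft) ≤ d := by
      calc _ ≤ #(univ.map (.inr : Fin d ↪ α ⊕ Fin d)) := by
            refine card_le_card_of_injOn g (fun i hi => ?_) hg.injOn
            have := hgt i
            simp only [coe_filter, Set.mem_ofPred_eq, mem_univ, true_and] at hi
            simp only [t', mem_union, mem_map] at this
            rcases this with ⟨a, -, ha⟩ | hr
            · simp [← ha] at hi
            · simpa using hr
        _ = d := by simp
    have := card_filter_add_card_filter_not (s := univ) fun i => (g i).isLeft
    rw [card_univ] at this
    change #M + _ = _ at this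
    omega

lemma le_isoCount_iff {V : Type*} [Fintype V] {G : SimpleGraph V} {S : Finset V} {m : ℕ} :
    m ≤ isoCount G S ↔
      ∃ I : Finset V, #I = m ∧ ∀ v ∈ I, v ∉ S ∧ ∀ u, G.Adj v u → u ∈ S := by
  constructor
  · intro h
    obtain ⟨I, hI, rfl⟩ := exists_subset_card_eq h
    exact ⟨I, rfl, fun v hv => (mem_filter.mp (hI hv)).2⟩
  · rintro ⟨I, rfl, hI⟩
    exact card_le_card fun v hv => mem_filter.mpr ⟨mem_univ v, hI v hv⟩

section FracMatching

variable {V : Type*} [Fintype V] [DecidableEq V] (G : SimpleGraph V)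

lemma le_fracNu {f : Sym2 V → ℝ} (hf : IsFracMatching G f) :
    ∑ e ∈ G.edgeFinset, f e ≤ fracNu G := by
  refine le_csSup ⟨#G.edgeFinset, ?_⟩ ⟨f, hf, rfl⟩
  rintro _ ⟨g, hg, rfl⟩
  calc ∑ e ∈ G.edgeFinset, g e ≤ ∑ e ∈ G.edgeFinset, (1 : ℝ) :=
        sum_le_sum fun e he => (hg.1 e he).2
    _ = #G.edgeFinset := by simp

lemma card_div_two_le_fracNu {ι : Type*} [Fintype ι] (ε : ι → Sym2 V)
    (hε : ∀ i, ε i ∈ G.edgeFinset) (h2 : ∀ v, #{i | v ∈ ε i} ≤ 2) :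
    (Fintype.card ι : ℝ) / 2 ≤ fracNu G := by
  set f : Sym2 V → ℝ := fun e => ∑ i, if ε i = e then 1 / 2 else 0
  have hload (v : V) :
      ∑ e ∈ G.edgeFinset, (if v ∈ e then f e else 0) = #{i | v ∈ ε i} / 2 := by
    calc _ = ∑ e ∈ G.edgeFinset, ∑ i,
          if ε i = e then (if v ∈ e then 1 / 2 else 0) else 0 := by
          refine sum_congr rfl fun e _ => ?_
          by_cases hv : v ∈ e <;> simp [f, hv]
      _ = ∑ i, if v ∈ ε i then (1 / 2 : ℝ) else 0 := by
          rw [sum_comm]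
          exact sum_congr rfl fun i _ => by rw [sum_ite_eq, if_pos (hε i)]
      _ = _ := by rw [sum_ite, sum_const_zero, add_zero, sum_const]; simp [div_eq_mul_inv]
  have hvertex : ∀ v, ∑ e ∈ G.edgeFinset, (if v ∈ e then f e else 0) ≤ 1 := fun v => by
    rw [hload, div_le_one two_pos]
    exact_mod_cast h2 v
  have hf0 : ∀ e, 0 ≤ f e := fun e => sum_nonneg fun i _ => by positivity
  refine le_of_eq_of_le ?_ (le_fracNu G (f := f) ⟨fun e he => ⟨hf0 e, ?_⟩, hvertex⟩)
  · rw [sum_comm]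
    simp [hε, div_eq_mul_inv]
  · obtain ⟨v, hv⟩ : ∃ v, v ∈ e := ⟨_, Sym2.out_fst_mem e⟩
    calc f e = if v ∈ e then f e else 0 := (if_pos hv).symm
      _ ≤ _ := single_le_sum (f := fun e => if v ∈ e then f e else 0)
          (fun e _ => by positivity) he
      _ ≤ 1 := hvertex v

lemma exists_card_biUnion_neighborFinset_add_le {k : ℕ} (hk : 0 < k)
    (hμ : fracNu G ≤ ((Fintype.card V : ℝ) - k) / 2) :
    ∃ A : Finset V, #(A.biUnion (G.neighborFinset ·)) + k ≤ #A := by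
  by_contra! hA
  obtain ⟨M, p, hp, hpN, hM⟩ := exists_injective_of_card_le_card_biUnion_add
    (G.neighborFinset ·) (k - 1) fun A => by have := hA A; omega
  have hload : ∀ v, #{a : M | v ∈ s((a : V), p a)} ≤ 2 := fun v => by
    calc _ ≤ #(({a : M | (a : V) = v} : Finset M) ∪ ({a | p a = v} : Finset M)) :=
        card_le_card fun a => by
          simp only [mem_filter, mem_univ, true_and, mem_union, Sym2.mem_iff]
          exact Or.imp Eq.symm Eq.symm
      _ ≤ #{a : M | (a : V) = v} + #{a | p a = v} := card_union_le _ _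
      _ ≤ 1 + 1 := add_le_add
          (card_le_one.mpr fun a ha b hb => by simp_all [Subtype.ext_iff])
          (card_le_one.mpr fun a ha b hb => hp (by simp_all))
  have h := card_div_two_le_fracNu G (fun a : M => s((a : V), p a))
    (fun a => G.mem_edgeFinset.mpr ((G.mem_neighborFinset _ _).mp (hpN a))) hload
  rw [Fintype.card_coe] at h
  have : (#M : ℝ) + k ≤ Fintype.card V := by linarith
  have : #M + k ≤ Fintype.card V := by exact_mod_cast this
  omega

lemma exists_card_add_le_isoCount {k : ℕ} {A : Finset V}
    (hA : #(A.biUnion (G.neighborFinset ·)) + k ≤ #A) :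
    ∃ S : Finset V, #S + k ≤ isoCount G S := by
  set N := A.biUnion (G.neighborFinset ·)
  set S := (A \ N).biUnion (G.neighborFinset ·)
  have hSN : S ⊆ N := biUnion_subset_biUnion_of_subset_left _ sdiff_subset
  have hSA : Disjoint S A := disjoint_left.mpr fun x hxS hxA => by
    obtain ⟨y, hy, hxy⟩ := mem_biUnion.mp hxS
    exact (mem_sdiff.mp hy).2
      (mem_biUnion.mpr ⟨x, hxA, by simpa [SimpleGraph.adj_comm] using hxy⟩)
  refine ⟨S, ?_⟩
  have hiso : #(A \ N) ≤ isoCount G S := le_isoCount_iff.mpr ⟨A \ N, rfl, fun v hv =>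
    ⟨fun hvS => (mem_sdiff.mp hv).2 (hSN hvS),
      fun u huv => mem_biUnion.mpr ⟨v, hv, (G.mem_neighborFinset v u).mpr huv⟩⟩⟩
  have hS : #S ≤ #(N \ A) :=
    card_le_card fun x hx => mem_sdiff.mpr ⟨hSN hx, disjoint_left.mp hSA hx⟩
  have h1 := card_sdiff_add_card_inter N A
  have h2 := card_sdiff_add_card_inter A N
  rw [inter_comm] at h2
  omega

end FracMatching

lemma ContinuousLinearMap.bddAbove_range_rayleighQuotient {E : Type*} [NormedAddCommGroup E]
    [InnerProductSpace ℝ E] (T : E →L[ℝ] E) :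
    BddAbove (Set.range fun x : {x : E // x ≠ 0} => T.rayleighQuotient x) :=
  ⟨‖T‖, fun _ ⟨x, hx⟩ => hx ▸ (le_abs_self _).trans (T.rayleighQuotient_le_norm x)⟩

section Spectral

variable {V : Type*} [Fintype V] [DecidableEq V] (G : SimpleGraph V)

lemma rayleighQuotient_toEuclideanCLM_toLp (A : Matrix V V ℝ) (x : V → ℝ) :
    (toEuclideanCLM (𝕜 := ℝ) A).rayleighQuotient (WithLp.toLp 2 x) =
      (x ⬝ᵥ A *ᵥ x) / (x ⬝ᵥ x) := by
  have hnorm : ‖WithLp.toLp 2 x‖ ^ 2 = x ⬝ᵥ x := by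
    rw [← real_inner_self_eq_norm_sq, EuclideanSpace.inner_toLp_toLp, star_trivial]
  rw [ContinuousLinearMap.rayleighQuotient, ContinuousLinearMap.reApplyInnerSelf_apply,
    real_inner_comm, inner_toEuclideanCLM, hnorm, RCLike.re_to_real]

lemma specRad_eq_iSup_rayleighQuotient [Nonempty V] :
    specRad G = ⨆ x : {x : EuclideanSpace ℝ V // x ≠ 0},
      (toEuclideanCLM (𝕜 := ℝ) (G.adjMatrix ℝ)).rayleighQuotient x := by
  set T := toEuclideanCLM (𝕜 := ℝ) (G.adjMatrix ℝ)
  have hT : (T : EuclideanSpace ℝ V →ₗ[ℝ] EuclideanSpace ℝ V).IsSymmetric :=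
    isSymmetric_toEuclideanLin_iff.mpr (G.isHermitian_adjMatrix ℝ)
  have hspec : ∀ μ, HasEigenvalue (toLin' (G.adjMatrix ℝ)) μ ↔
      HasEigenvalue (T : EuclideanSpace ℝ V →ₗ[ℝ] EuclideanSpace ℝ V) μ := fun μ => by
    rw [hasEigenvalue_iff_mem_spectrum, hasEigenvalue_iff_mem_spectrum, spectrum_toLin',
      coe_toEuclideanCLM_eq_toEuclideanLin, spectrum_toLpLin]
  refine IsGreatest.csSup_eq ⟨(hspec _).mpr hT.hasEigenvalue_iSup_of_finiteDimensional, ?_⟩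
  intro μ hμ
  obtain ⟨v, hv⟩ := ((hspec μ).mp hμ).exists_hasEigenvector
  have hv0 : ‖v‖ ≠ 0 := norm_ne_zero_iff.mpr hv.2
  calc μ = T.rayleighQuotient v := by
        rw [ContinuousLinearMap.rayleighQuotient, ContinuousLinearMap.reApplyInnerSelf_apply,
          ← ContinuousLinearMap.coe_coe, hv.apply_eq_smul, real_inner_smul_left,
          real_inner_self_eq_norm_sq, RCLike.re_to_real]
        field_simp
    _ ≤ _ := le_ciSup T.bddAbove_range_rayleighQuotient ⟨v, hv.2⟩

lemma dotProduct_adjMatrix_mulVec_le (x : V → ℝ) :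
    x ⬝ᵥ G.adjMatrix ℝ *ᵥ x ≤ specRad G * (x ⬝ᵥ x) := by
  rcases eq_or_ne x 0 with rfl | hx
  · simp
  obtain ⟨i, -⟩ := Function.ne_iff.mp hx
  have : Nonempty V := ⟨i⟩
  have hpos : 0 < x ⬝ᵥ x := by simpa using dotProduct_star_self_pos_iff.mpr hx
  have h := le_ciSup
    (toEuclideanCLM (𝕜 := ℝ) (G.adjMatrix ℝ)).bddAbove_range_rayleighQuotient
    (⟨WithLp.toLp 2 x, by simpa using hx⟩ : {x : EuclideanSpace ℝ V // x ≠ 0})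
  rw [← specRad_eq_iSup_rayleighQuotient, rayleighQuotient_toEuclideanCLM_toLp,
    div_le_iff₀ hpos] at h
  exact h

lemma exists_adjMatrix_mulVec_eq_specRad_smul [Nonempty V] :
    ∃ x ≠ 0, G.adjMatrix ℝ *ᵥ x = specRad G • x := by
  have hT : (toEuclideanLin (G.adjMatrix ℝ)).IsSymmetric :=
    isSymmetric_toEuclideanLin_iff.mpr (G.isHermitian_adjMatrix ℝ)
  obtain ⟨v, hv⟩ := hT.hasEigenvalue_iSup_of_finiteDimensional.exists_hasEigenvector
  refine ⟨v.ofLp, by simpa using hv.2, ?_⟩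
  rw [specRad_eq_iSup_rayleighQuotient]
  exact congrArg WithLp.ofLp hv.apply_eq_smul

lemma adjMatrix_mulVec_eq_specRad_smul {x : V → ℝ}
    (hx : x ⬝ᵥ G.adjMatrix ℝ *ᵥ x = specRad G * (x ⬝ᵥ x)) :
    G.adjMatrix ℝ *ᵥ x = specRad G • x := by
  -- `ρ(G) • 1 - A` is positive semidefinite, and `x` is a zero of its quadratic form.
  set B := specRad G • (1 : Matrix V V ℝ) - G.adjMatrix ℝ
  have hBmulVec (y : V → ℝ) : B *ᵥ y = specRad G • y - G.adjMatrix ℝ *ᵥ y := by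
    rw [sub_mulVec, smul_mulVec, one_mulVec]
  have hBquad (y : V → ℝ) :
      star y ⬝ᵥ B *ᵥ y = specRad G * (y ⬝ᵥ y) - y ⬝ᵥ G.adjMatrix ℝ *ᵥ y := by
    rw [hBmulVec, star_trivial, dotProduct_sub, dotProduct_smul, smul_eq_mul]
  have hB : B.PosSemidef := posSemidef_iff_dotProduct_mulVec.mpr
    ⟨(isHermitian_one.smul (.all _)).sub (G.isHermitian_adjMatrix ℝ),
      fun y => by linarith [hBquad y, dotProduct_adjMatrix_mulVec_le G y]⟩
  have h0 := (hB.dotProduct_mulVec_zero_iff x).mp (by rw [hBquad, hx, sub_self])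
  rwa [hBmulVec, sub_eq_zero, eq_comm] at h0

lemma one_le_specRad_of_adj {p q : V} (hpq : G.Adj p q) : 1 ≤ specRad G := by
  set x : V → ℝ := Pi.single p 1 + Pi.single q 1
  have hx0 : ∀ i, 0 ≤ x i := fun i => by
    simp only [x, Pi.add_apply, Pi.single_apply]; split_ifs <;> norm_num
  have hxp : x p = 1 := by simp [x, hpq.ne.symm]
  have hxq : x q = 1 := by simp [x, hpq.ne]
  have hdot : ∀ v, x ⬝ᵥ v = v p + v q := fun v => by simp [x, add_dotProduct]
  have hAx {i j : V} (hij : G.Adj i j) (hj : x j = 1) : 1 ≤ (G.adjMatrix ℝ *ᵥ x) i := by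
    rw [SimpleGraph.adjMatrix_mulVec_apply, ← hj]
    exact single_le_sum (fun i _ => hx0 i) ((G.mem_neighborFinset _ _).mpr hij)
  have h := dotProduct_adjMatrix_mulVec_le G x
  rw [hdot, hdot, hxp, hxq] at h
  linarith [hAx hpq hxq, hAx hpq.symm hxp]

end Spectral

section Perron

variable {W : Type*} [Fintype W] {J : SimpleGraph W} {y : W → ℝ} {ρ : ℝ}

lemma apply_eq_zero_of_reachable (hy : 0 ≤ y) (heig : J.adjMatrix ℝ *ᵥ y = ρ • y) {p w : W}
    (hp : y p = 0) (hpw : J.Reachable p w) : y w = 0 := by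
  rw [SimpleGraph.reachable_iff_reflTransGen] at hpw
  induction hpw with
  | refl => exact hp
  | @tail b c _ hbc ih =>
    have hsum : ∑ z ∈ J.neighborFinset b, y z = 0 := by
      rw [← SimpleGraph.adjMatrix_mulVec_apply, heig, Pi.smul_apply, ih, smul_zero]
    exact (sum_eq_zero_iff_of_nonneg fun z _ => hy z).mp hsum c
      ((J.mem_neighborFinset b c).mpr hbc)

lemma apply_eq_zero_of_forall_not_adj (heig : J.adjMatrix ℝ *ᵥ y = ρ • y) (hρ : ρ ≠ 0)
    {w : W} (hw : ∀ z, ¬J.Adj w z) : y w = 0 := by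
  have hN : J.neighborFinset w = ∅ := eq_empty_of_forall_notMem fun z hz =>
    hw z ((J.mem_neighborFinset w z).mp hz)
  have h := congrFun heig w
  rw [SimpleGraph.adjMatrix_mulVec_apply, hN, sum_empty, Pi.smul_apply, smul_eq_mul] at h
  exact (mul_eq_zero.mp h.symm).resolve_left hρ

lemma eq_zero_of_adj_of_mul_eq_zero (hJ : ∀ p q w z, J.Adj p q → J.Adj w z → J.Reachable p w)
    (hy : 0 ≤ y) (heig : J.adjMatrix ℝ *ᵥ y = ρ • y) (hρ : ρ ≠ 0) {p q : W}
    (hpq : J.Adj p q) (h0 : y p * y q = 0) : y = 0 := by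
  wlog hp : y p = 0 generalizing p q
  · exact this hpq.symm (by rwa [mul_comm]) ((mul_eq_zero.mp h0).resolve_left hp)
  funext w
  by_cases hw : ∃ z, J.Adj w z
  · obtain ⟨z, hwz⟩ := hw
    exact apply_eq_zero_of_reachable hy heig hp (hJ p q w z hpq hwz)
  · exact apply_eq_zero_of_forall_not_adj heig hρ (not_exists.mp hw)

end Perron

section Transport

variable {V W : Type*} {G : SimpleGraph V} {J : SimpleGraph W} (e : V ≃ W)

lemma dotProduct_adjMatrix_mulVec_abs_comp_symm [Fintype V] [Fintype W] (x : V → ℝ) :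
    (fun w => |x (e.symm w)|) ⬝ᵥ J.adjMatrix ℝ *ᵥ (fun w => |x (e.symm w)|) =
      ∑ u, ∑ v, if J.Adj (e u) (e v) then |x u| * |x v| else 0 := by
  rw [SimpleGraph.dotProduct_mulVec_adjMatrix, ← e.sum_comp]
  refine sum_congr rfl fun u _ => ?_
  rw [← e.sum_comp]
  simp

lemma abs_comp_symm_dotProduct_self [Fintype V] [Fintype W] (x : V → ℝ) :
    (fun w => |x (e.symm w)|) ⬝ᵥ (fun w => |x (e.symm w)|) = x ⬝ᵥ x := by
  simp only [dotProduct, abs_mul_abs_self]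
  exact e.symm.sum_comp fun u => x u * x u

variable (hsub : ∀ u v, G.Adj u v → J.Adj (e u) (e v))
include hsub

lemma ite_adj_le_ite_adj (x : V → ℝ) (u v : V) :
    (if G.Adj u v then x u * x v else 0) ≤ if J.Adj (e u) (e v) then |x u| * |x v| else 0 := by
  by_cases huv : G.Adj u v
  · rw [if_pos huv, if_pos (hsub u v huv), ← abs_mul]
    exact le_abs_self _
  · rw [if_neg huv]
    split_ifs <;> positivity

variable [Fintype V] [Fintype W]

lemma dotProduct_adjMatrix_mulVec_le_abs_comp_symm (x : V → ℝ) :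
    x ⬝ᵥ G.adjMatrix ℝ *ᵥ x ≤
      (fun w => |x (e.symm w)|) ⬝ᵥ J.adjMatrix ℝ *ᵥ (fun w => |x (e.symm w)|) := by
  rw [dotProduct_adjMatrix_mulVec_abs_comp_symm, SimpleGraph.dotProduct_mulVec_adjMatrix]
  exact sum_le_sum fun u _ => sum_le_sum fun v _ => ite_adj_le_ite_adj e hsub x u v

lemma abs_mul_abs_eq_zero_of_dotProduct_adjMatrix_mulVec_eq {x : V → ℝ}
    (h : x ⬝ᵥ G.adjMatrix ℝ *ᵥ x =
      (fun w => |x (e.symm w)|) ⬝ᵥ J.adjMatrix ℝ *ᵥ (fun w => |x (e.symm w)|))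
    {u v : V} (huvJ : J.Adj (e u) (e v)) (huvG : ¬G.Adj u v) : |x u| * |x v| = 0 := by
  rw [dotProduct_adjMatrix_mulVec_abs_comp_symm, SimpleGraph.dotProduct_mulVec_adjMatrix] at h
  have hrow := (sum_eq_sum_iff_of_le fun u _ => sum_le_sum fun v _ =>
    ite_adj_le_ite_adj e hsub x u v).mp h u (mem_univ u)
  have hentry := (sum_eq_sum_iff_of_le fun v _ => ite_adj_le_ite_adj e hsub x u v).mp
    hrow v (mem_univ v)
  rwa [if_neg huvG, if_pos huvJ, eq_comm] at hentry

variable [DecidableEq V] [DecidableEq W] [Nonempty V]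

lemma specRad_le_of_adj_map : specRad G ≤ specRad J := by
  obtain ⟨x, hx0, hx⟩ := exists_adjMatrix_mulVec_eq_specRad_smul G
  have hxx : 0 < x ⬝ᵥ x := by simpa using dotProduct_star_self_pos_iff.mpr hx0
  refine le_of_mul_le_mul_right ?_ hxx
  calc specRad G * (x ⬝ᵥ x) = x ⬝ᵥ G.adjMatrix ℝ *ᵥ x := by
        rw [hx, dotProduct_smul, smul_eq_mul]
    _ ≤ _ := dotProduct_adjMatrix_mulVec_le_abs_comp_symm e hsub x
    _ ≤ _ := dotProduct_adjMatrix_mulVec_le J _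
    _ = specRad J * (x ⬝ᵥ x) := by rw [abs_comp_symm_dotProduct_self]

lemma specRad_lt_of_adj_map_of_not_adj
    (hJ : ∀ p q w z, J.Adj p q → J.Adj w z → J.Reachable p w) {p q : W} (hpq : J.Adj p q)
    (hG : ¬G.Adj (e.symm p) (e.symm q)) : specRad G < specRad J := by
  refine (specRad_le_of_adj_map e hsub).lt_of_ne fun heq => ?_
  obtain ⟨x, hx0, hx⟩ := exists_adjMatrix_mulVec_eq_specRad_smul G
  set y : W → ℝ := fun w => |x (e.symm w)|
  have hGx : x ⬝ᵥ G.adjMatrix ℝ *ᵥ x = specRad J * (x ⬝ᵥ x) := by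
    rw [hx, dotProduct_smul, smul_eq_mul, heq]
  have hle : x ⬝ᵥ G.adjMatrix ℝ *ᵥ x ≤ y ⬝ᵥ J.adjMatrix ℝ *ᵥ y :=
    dotProduct_adjMatrix_mulVec_le_abs_comp_symm e hsub x
  have hJy : y ⬝ᵥ J.adjMatrix ℝ *ᵥ y ≤ specRad J * (x ⬝ᵥ x) := by
    rw [← abs_comp_symm_dotProduct_self e x]
    exact dotProduct_adjMatrix_mulVec_le J y
  have hyeig : J.adjMatrix ℝ *ᵥ y = specRad J • y := by
    refine adjMatrix_mulVec_eq_specRad_smul J ?_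
    rw [abs_comp_symm_dotProduct_self]
    linarith
  have hpq0 : y p * y q = 0 := by
    have := abs_mul_abs_eq_zero_of_dotProduct_adjMatrix_mulVec_eq e hsub (le_antisymm hle
      (by linarith)) (u := e.symm p) (v := e.symm q) (by simpa using hpq) hG
    simpa [y] using this
  have hρ : specRad J ≠ 0 := ((one_le_specRad_of_adj J hpq).trans_lt' one_pos).ne'
  have hy0 := eq_zero_of_adj_of_mul_eq_zero hJ (fun w => abs_nonneg _) hyeig hρ hpq hpq0
  exact hx0 (funext fun u => abs_eq_zero.mp (by simpa [y] using congrFun hy0 (e u)))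

lemma specRad_eq_iff_nonempty_iso (hJ : ∀ p q w z, J.Adj p q → J.Adj w z → J.Reachable p w) :
    specRad G = specRad J ↔ Nonempty (G ≃g J) := by
  refine ⟨fun heq => ⟨e, fun {u v} => ⟨fun huv => ?_, hsub u v⟩⟩, fun ⟨φ⟩ => ?_⟩
  · by_contra hG
    exact (specRad_lt_of_adj_map_of_not_adj e hsub hJ huv (by simpa using hG)).ne heq
  · have : Nonempty W := ⟨e (Classical.arbitrary V)⟩
    exact (specRad_le_of_adj_map e hsub).antisymm
      (specRad_le_of_adj_map φ.symm.toEquiv fun u v h => φ.symm.map_adj_iff.mpr h)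

end Transport

lemma exists_equiv_fin_lt_card_le_iff {V : Type*} [Fintype V] (c : V → ℕ) :
    ∃ e : V ≃ Fin (Fintype.card V), ∀ v a, (e v : ℕ) < #{w | c w ≤ a} ↔ c v ≤ a := by
  set σ := Fintype.equivFin V
  set τ := Tuple.sort (c ∘ σ.symm)
  refine ⟨σ.trans τ.symm, fun v a => ?_⟩
  have hcard : #{w | c w ≤ a} = #{i | ((c ∘ σ.symm) ∘ τ) i ≤ a} :=
    card_equiv (σ.trans τ.symm) fun w => by simp
  rw [hcard, Tuple.lt_card_le_iff_apply_le_of_monotone (Tuple.monotone_sort _)]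
  simp [τ]

lemma jGraph_adj {a b c : ℕ} {x y : Fin (a + b + c)} :
    (jGraph a b c).Adj x y ↔ x ≠ y ∧ ((x < a ∨ (x < a + b ∧ y < a + b)) ∨
      (y < a ∨ (y < a + b ∧ x < a + b))) :=
  SimpleGraph.fromRel_adj ..

lemma exists_equiv_jGraph_adj {V : Type*} [Fintype V] (G : SimpleGraph V) {S I : Finset V}
    (hSI : Disjoint S I) (hI : ∀ v ∈ I, ∀ u, G.Adj v u → u ∈ S) {a b c : ℕ}
    (hS : #S = a) (hIc : #I = c) (hV : Fintype.card V = a + b + c) :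
    ∃ e : V ≃ Fin (a + b + c), ∀ u v, G.Adj u v → (jGraph a b c).Adj (e u) (e v) := by
  set level : V → ℕ := fun v => if v ∈ S then 0 else if v ∈ I then 2 else 1
  obtain ⟨e, he⟩ := exists_equiv_fin_lt_card_le_iff level
  have h0 : #{w | level w ≤ 0} = a := by
    rw [← hS]; congr 1; ext w; by_cases w ∈ S <;> by_cases w ∈ I <;> simp [level, *]
  have h1 : #{w | level w ≤ 1} = a + b := by
    have : ({w | level w ≤ 1} : Finset V) = univ \ I := by
      ext w
      by_cases hwI : w ∈ I
      · simp [level, hwI, disjoint_right.mp hSI hwI]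
      · by_cases hwS : w ∈ S <;> simp [level, hwI, hwS]
    rw [this, card_sdiff_of_subset (subset_univ I), card_univ]
    omega
  have hlow : ∀ v ∉ I, (e v : ℕ) < a + b := fun v hv => h1 ▸ (he v 1).mpr (by
    simp only [level, if_neg hv]; split_ifs <;> omega)
  have hS0 : ∀ v ∈ S, (e v : ℕ) < a := fun v hv => h0 ▸ (he v 0).mpr (by simp [level, hv])
  refine ⟨e.trans (finCongr hV), fun u v huv => jGraph_adj.mpr ⟨by simpa using huv.ne, ?_⟩⟩
  simp only [Equiv.trans_apply, finCongr_apply, Fin.val_cast]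
  by_cases hu : u ∈ I
  · exact .inr (.inl (hS0 v (hI u hu v huv)))
  by_cases hv : v ∈ I
  · exact .inl (.inl (hS0 u (hI v hv u huv.symm)))
  exact .inl (.inr ⟨hlow u hu, hlow v hv⟩)

lemma jGraph_reachable_of_adj {a b c : ℕ} {p q w z : Fin (a + b + c)}
    (hpq : (jGraph a b c).Adj p q) (hwz : (jGraph a b c).Adj w z) :
    (jGraph a b c).Reachable p w := by
  rcases Nat.eq_zero_or_pos a with rfl | ha
  · have hp : (p : ℕ) < b := by rw [jGraph_adj] at hpq; omega
    have hw : (w : ℕ) < b := by rw [jGraph_adj] at hwz; omega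
    rcases eq_or_ne p w with rfl | hne
    · rfl
    · exact (jGraph_adj.mpr ⟨hne, by omega⟩).reachable
  · set o : Fin (a + b + c) := ⟨0, by omega⟩
    have ho : ∀ v, (jGraph a b c).Reachable o v := fun v => by
      rcases eq_or_ne o v with rfl | hne
      · rfl
      · exact (jGraph_adj.mpr ⟨hne, .inl (.inl (by simp [o, ha]))⟩).reachable
    exact (ho p).symm.trans (ho w)

/-- If `G` has order `n`, minimum degree `δ` and `μ_f(G) ≤ (n−k)/2` (`k > 0`), then
there is an integer `s` with `δ ≤ s ≤ (n−k)/2` such that `G` is a spanning subgraph of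
`K_s ∨ (K_{n−2s−k} + (s+k)K_1)`; consequently `ρ(G) ≤ ρ(K_s ∨ (K_{n−2s−k} + (s+k)K_1))`
with equality if and only if `G ≅ K_s ∨ (K_{n−2s−k} + (s+k)K_1)`. -/
theorem stmt17 (n k δ : ℕ) (hk : 0 < k)
    (G : SimpleGraph (Fin n)) [DecidableRel G.Adj] (hδ : G.minDegree = δ)
    (hμ : fracNu G ≤ ((n : ℝ) - k) / 2) :
    ∃ s : ℕ, δ ≤ s ∧ 2 * s + k ≤ n ∧
      (∃ e : Fin n ≃ Fin (s + (n - 2 * s - k) + (s + k)),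
        ∀ u v : Fin n, G.Adj u v → (jGraph s (n - 2 * s - k) (s + k)).Adj (e u) (e v)) ∧
      specRad G ≤ specRad (jGraph s (n - 2 * s - k) (s + k)) ∧
      (specRad G = specRad (jGraph s (n - 2 * s - k) (s + k)) ↔
        Nonempty (G ≃g jGraph s (n - 2 * s - k) (s + k))) := by
  obtain ⟨A, hA⟩ := exists_card_biUnion_neighborFinset_add_le G hk (by simpa using hμ)
  obtain ⟨S, hS⟩ := exists_card_add_le_isoCount G hA
  obtain ⟨I, hIcard, hI⟩ := le_isoCount_iff.mp hS
  have hSI : Disjoint S I := disjoint_right.mpr fun v hv => (hI v hv).1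
  have hn : #S + #I ≤ n := by simpa [card_union_of_disjoint hSI] using card_le_univ (S ∪ I)
  obtain ⟨v, hv⟩ : I.Nonempty := card_pos.mp (by omega)
  have : Nonempty (Fin n) := ⟨v⟩
  have hδS : δ ≤ #S := hδ ▸ (G.minDegree_le_degree v).trans
    (card_le_card fun u hu => (hI v hv).2 u ((G.mem_neighborFinset v u).mp hu))
  obtain ⟨e, he⟩ := exists_equiv_jGraph_adj G hSI (fun v hv => (hI v hv).2) rfl hIcard
    (b := n - 2 * #S - k) (by rw [Fintype.card_fin]; omega)
  exact ⟨#S, hδS, by omega, ⟨e, he⟩, specRad_le_of_adj_map e he,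
    specRad_eq_iff_nonempty_iso e he fun _ _ _ _ => jGraph_reachable_of_adj⟩
end
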